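/- (Discrete solvability implies discrete norm equivalence.) Let F be the N×N unitary DFT matrix and I ⊆ {1,...,N}. Suppose there is a constant C such that for every x ∈ ℂ^N supported on I there exists r ∈ ℂ^N supported on the complement of I with ‖F(x+r)‖_{ℓ^∞} ≤ (C/√N)‖x‖_{ℓ²}. Then every b ∈ ℂ^N supported on I satisfies ‖b‖_{ℓ²} ≤ (C/√N)‖Fb‖_{ℓ¹}. -/

import Mathlib

noncomputable def dftMatrix (N : ℕ) : Matrix (Fin N) (Fin N) ℂ :=
  fun j k => (1 / Real.sqrt N) *
    Complex.exp (-2 * Real.pi * Complex.I * (j : ℕ) * (k : ℕ) / N)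

/-! The DFT matrix is unitary by orthogonality of the `N`-th roots of unity. Hence, for `b`
supported on `I` and `r` vanishing on `I`,
  `‖b‖₂² = ⟨b, b + r⟩ = ⟨Fb, F(b + r)⟩ ≤ ‖Fb‖₁ ‖F(b + r)‖_∞ ≤ ‖Fb‖₁ (C/√N) ‖b‖₂`,
and it remains to divide by `‖b‖₂`. -/

open Finset Matrix

theorem IsPrimitiveRoot.geom_sum_pow_div_pow {K : Type*} [Field K] {ζ : K} {N i k : ℕ}
    (hζ : IsPrimitiveRoot ζ N) (hi : i < N) (hk : k < N) :
    ∑ j ∈ range N, (ζ ^ k / ζ ^ i) ^ j = if i = k then (N : K) else 0 := by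
  have hζ0 : ζ ≠ 0 := hζ.ne_zero (by omega)
  split_ifs with hik
  · simp [hik, hζ0]
  · have hne : ζ ^ k / ζ ^ i ≠ 1 := by
      rw [Ne, div_eq_one_iff_eq (pow_ne_zero _ hζ0)]
      exact fun h => hik (hζ.pow_inj hk hi h).symm
    rw [geom_sum_eq hne, div_pow, ← pow_mul, ← pow_mul, mul_comm k, mul_comm i, pow_mul,
      pow_mul, hζ.pow_eq_one]
    simp

theorem Matrix.star_mulVec_dotProduct_mulVec {n R : Type*} [Fintype n] [DecidableEq n]
    [CommRing R] [StarRing R] {U : Matrix n n R} (hU : U ∈ unitaryGroup n R) (x y : n → R) :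
    star (U *ᵥ x) ⬝ᵥ (U *ᵥ y) = star x ⬝ᵥ y := by
  rw [star_mulVec, dotProduct_mulVec, vecMul_vecMul, ← star_eq_conjTranspose,
    mem_unitaryGroup_iff'.mp hU, vecMul_one]

theorem norm_dotProduct_le {n 𝕜 : Type*} [Fintype n] [RCLike 𝕜] (v w : n → 𝕜) {M : ℝ}
    (hw : ∀ j, ‖w j‖ ≤ M) : ‖v ⬝ᵥ w‖ ≤ (∑ j, ‖v j‖) * M := by
  rw [sum_mul]
  refine (norm_sum_le _ _).trans (sum_le_sum fun j _ => ?_)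
  rw [norm_mul]
  exact mul_le_mul_of_nonneg_left (hw j) (norm_nonneg _)

theorem star_dotProduct_add_eq_sum_norm_sq {n 𝕜 : Type*} [Fintype n] [RCLike 𝕜] {I : Finset n}
    {b r : n → 𝕜} (hb : ∀ i ∉ I, b i = 0) (hr : ∀ i ∈ I, r i = 0) :
    star b ⬝ᵥ (b + r) = ((∑ i, ‖b i‖ ^ 2 : ℝ) : 𝕜) := by
  rw [RCLike.ofReal_sum]
  refine sum_congr rfl fun i _ => ?_
  by_cases hi : i ∈ I
  · simp [hr i hi, RCLike.conj_mul]
  · simp [hb i hi]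

theorem dftMatrix_apply (N : ℕ) (j k : Fin N) :
    dftMatrix N j k =
      (Real.sqrt N : ℂ)⁻¹ * (Complex.exp (2 * Real.pi * Complex.I / N))⁻¹ ^ ((j : ℕ) * k) := by
  rw [dftMatrix, ← Complex.exp_neg, ← Complex.exp_nat_mul, one_div]
  congr 2
  push_cast
  ring

theorem Complex.star_inv_exp_two_pi_I_div (N : ℕ) :
    star (Complex.exp (2 * Real.pi * Complex.I / N))⁻¹ =
      (Complex.exp (2 * Real.pi * Complex.I / N))⁻¹⁻¹ := by
  rw [inv_inv, star_inv₀, Complex.star_def, ← Complex.exp_conj, ← Complex.exp_neg]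
  congr 1
  simp only [map_div₀, map_mul, map_ofNat, conj_ofReal, conj_I, mul_neg, map_natCast]
  ring

theorem dftMatrix_mem_unitaryGroup (N : ℕ) : dftMatrix N ∈ unitaryGroup (Fin N) ℂ := by
  rw [mem_unitaryGroup_iff']
  ext i k
  have hN : N ≠ 0 := Nat.ne_zero_of_lt i.isLt
  let w := (Complex.exp (2 * Real.pi * Complex.I / N))⁻¹
  have hw : IsPrimitiveRoot w N := (Complex.isPrimitiveRoot_exp N hN).inv
  have hterm : ∀ j : Fin N, star (dftMatrix N j i) * dftMatrix N j k
      = (N : ℂ)⁻¹ * (w ^ (k : ℕ) / w ^ (i : ℕ)) ^ (j : ℕ) := by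
    intro j
    have hc : star (Real.sqrt N : ℂ)⁻¹ * (Real.sqrt N : ℂ)⁻¹ = (N : ℂ)⁻¹ := by
      rw [star_inv₀, Complex.star_def, Complex.conj_ofReal, ← mul_inv, ← Complex.ofReal_mul,
        Real.mul_self_sqrt (Nat.cast_nonneg N), Complex.ofReal_natCast]
    rw [dftMatrix_apply, dftMatrix_apply, star_mul', star_pow, Complex.star_inv_exp_two_pi_I_div,
      ← hc, div_pow, ← pow_mul, ← pow_mul, inv_pow]
    ring
  rw [star_eq_conjTranspose, mul_apply]
  simp only [conjTranspose_apply, hterm, ← mul_sum,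
    Fin.sum_univ_eq_sum_range (fun j => (w ^ (k : ℕ) / w ^ (i : ℕ)) ^ j),
    hw.geom_sum_pow_div_pow i.isLt k.isLt, one_apply, Fin.val_inj]
  split_ifs <;> simp [hN]

theorem Real.sqrt_le_of_le_mul_sqrt {x a : ℝ} (hx : 0 < x) (h : x ≤ a * √x) : √x ≤ a :=
  le_of_mul_le_mul_right (by rwa [Real.mul_self_sqrt hx.le]) (Real.sqrt_pos.2 hx)

theorem stmt19_general (N : ℕ) (I : Finset (Fin N)) (C : ℝ)
    (hsolv : ∀ x : Fin N → ℂ, (∀ i ∉ I, x i = 0) →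
      ∃ r : Fin N → ℂ, (∀ i ∈ I, r i = 0) ∧
        ∀ j, ‖(dftMatrix N).mulVec (x + r) j‖
          ≤ (C / Real.sqrt N) * Real.sqrt (∑ i, ‖x i‖ ^ 2)) :
    ∀ b : Fin N → ℂ, (∀ i ∉ I, b i = 0) →
      Real.sqrt (∑ i, ‖b i‖ ^ 2)
        ≤ (C / Real.sqrt N) * ∑ j, ‖(dftMatrix N).mulVec b j‖ := by
  intro b hb
  rcases eq_or_ne b 0 with rfl | hb0
  · simp
  obtain ⟨r, hr, hbound⟩ := hsolv b hb
  have hpos : 0 < ∑ i, ‖b i‖ ^ 2 := by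
    obtain ⟨i, hi⟩ := Function.ne_iff.mp hb0
    exact sum_pos' (fun i _ => sq_nonneg _) ⟨i, mem_univ i, by positivity⟩
  refine Real.sqrt_le_of_le_mul_sqrt hpos ?_
  calc ∑ i, ‖b i‖ ^ 2
      = ‖star (dftMatrix N *ᵥ b) ⬝ᵥ (dftMatrix N *ᵥ (b + r))‖ := by
        rw [star_mulVec_dotProduct_mulVec (dftMatrix_mem_unitaryGroup N),
          star_dotProduct_add_eq_sum_norm_sq hb hr, RCLike.norm_ofReal, abs_of_pos hpos]
    _ ≤ (∑ j, ‖(dftMatrix N *ᵥ b) j‖) * (C / √N * √(∑ i, ‖b i‖ ^ 2)) := by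
        simpa only [Pi.star_apply, norm_star] using
          norm_dotProduct_le (star (dftMatrix N *ᵥ b)) _ hbound
    _ = C / √N * (∑ j, ‖(dftMatrix N *ᵥ b) j‖) * √(∑ i, ‖b i‖ ^ 2) := by ring

/-- Discrete solvability implies the discrete norm equivalence: if every `x` supported
on `I` admits a compensation vector `r` supported on `Iᶜ` with
`‖F(x+r)‖_∞ ≤ (C/√N)‖x‖₂`, then every `b` supported on `I` satisfies
`‖b‖₂ ≤ (C/√N)‖Fb‖₁`. -/
theorem stmt19 (N : ℕ) (hN : 0 < N) (I : Finset (Fin N)) (C : ℝ)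
    (hsolv : ∀ x : Fin N → ℂ, (∀ i ∉ I, x i = 0) →
      ∃ r : Fin N → ℂ, (∀ i ∈ I, r i = 0) ∧
        ∀ j, ‖(dftMatrix N).mulVec (x + r) j‖
          ≤ (C / Real.sqrt N) * Real.sqrt (∑ i, ‖x i‖ ^ 2)) :
    ∀ b : Fin N → ℂ, (∀ i ∉ I, b i = 0) →
      Real.sqrt (∑ i, ‖b i‖ ^ 2)
        ≤ (C / Real.sqrt N) * ∑ j, ‖(dftMatrix N).mulVec b j‖ :=
  stmt19_general N I C hsolv
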